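/- Let d ≥ 2, b > 0, and Z : ℝ^{d−1} → ℝ be a C¹ function. Define α : ℝ^d → ℝ by α(x) = Z(x_1² + (x_2/b)², x̄) where x̄ = (x_3,…,x_d), and define F : ℝ^d → ℝ^d by F(x) = (x_1 cos α(x) − (1/b) x_2 sin α(x), b x_1 sin α(x) + x_2 cos α(x), x̄). Then the Jacobian determinant of F equals 1 at every point of ℝ^d. -/

import Mathlib

theorem stmt_6 (d : ℕ) (hd : 2 ≤ d) (b : ℝ) (hb : 0 < b)
    (Z : ℝ → (Fin d → ℝ) → ℝ)
    (hZ : ContDiff ℝ 1 (fun q : ℝ × (Fin d → ℝ) => Z q.1 q.2))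
    (hZtail : ∀ (u : ℝ) (x y : Fin d → ℝ),
      (∀ i : Fin d, 2 ≤ (i : ℕ) → x i = y i) → Z u x = Z u y)
    (α : (Fin d → ℝ) → ℝ)
    (hα : ∀ x, α x = Z (x ⟨0, by omega⟩ ^ 2 + (x ⟨1, by omega⟩ / b) ^ 2) x)
    (F : (Fin d → ℝ) → Fin d → ℝ)
    (hF : ∀ x, F x = fun i : Fin d =>
      if (i : ℕ) = 0 then
        x ⟨0, by omega⟩ * Real.cos (α x) - (1 / b) * x ⟨1, by omega⟩ * Real.sin (α x)
      else if (i : ℕ) = 1 then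
        b * x ⟨0, by omega⟩ * Real.sin (α x) + x ⟨1, by omega⟩ * Real.cos (α x)
      else x i) :
    ∀ x, (fderiv ℝ F x).det = 1 := by
  have hb' : b ≠ 0 := ne_of_gt hb
  intro x
  set i0 : Fin d := ⟨0, by omega⟩ with hi0
  set i1 : Fin d := ⟨1, by omega⟩ with hi1
  have hi01 : i0 ≠ i1 := by simp [hi0, hi1, Fin.ext_iff]
  -- differentiability of α
  have hZd : Differentiable ℝ (fun q : ℝ × (Fin d → ℝ) => Z q.1 q.2) :=
    hZ.differentiable one_ne_zero
  have hαdiff : Differentiable ℝ α := by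
    have h2 : Differentiable ℝ (fun v : Fin d → ℝ =>
        Z (v i0 ^ 2 + (v i1 / b) ^ 2) v) := by
      have h1 : Differentiable ℝ (fun v : Fin d → ℝ =>
          ((v i0 ^ 2 + (v i1 / b) ^ 2, v) : ℝ × (Fin d → ℝ))) := by
        fun_prop
      exact hZd.comp h1
    have he : α = fun v : Fin d → ℝ => Z (v i0 ^ 2 + (v i1 / b) ^ 2) v :=
      funext fun v => hα v
    rw [he]; exact h2
  set φ : (Fin d → ℝ) →L[ℝ] ℝ := fderiv ℝ α x with hφdef
  have hφ : HasFDerivAt α φ x := (hαdiff x).hasFDerivAt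
  set A := Real.cos (α x) with hA
  set B := Real.sin (α x) with hB
  set ζ : ℝ → ℝ := fun u => Z u x with hζ
  have hζdiff : Differentiable ℝ ζ := by
    have h3 : Differentiable ℝ (fun u : ℝ => ((u, x) : ℝ × (Fin d → ℝ))) := by fun_prop
    exact hZd.comp h3
  set u₀ : ℝ := x i0 ^ 2 + (x i1 / b) ^ 2 with hu₀
  set P : ℝ := deriv ζ u₀ with hP
  set e0 : Fin d → ℝ := Pi.single i0 1 with he0
  set e1 : Fin d → ℝ := Pi.single i1 1 with he1
  set p0 : ℝ := φ e0 with hp0def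
  set p1 : ℝ := φ e1 with hp1def
  -- directional derivative along e0
  have key0 : p0 = P * (2 * x i0) := by
    have hline : HasDerivAt (fun t : ℝ => x + t • e0) e0 0 := by
      simpa using ((hasDerivAt_id (0:ℝ)).smul_const e0).const_add x
    have hφ' : HasFDerivAt α φ (x + (0:ℝ) • e0) := by simpa using hφ
    have hcomp : HasDerivAt (fun t : ℝ => α (x + t • e0)) p0 0 :=
      hφ'.comp_hasDerivAt 0 hline
    have heq : (fun t : ℝ => α (x + t • e0))
        = fun t : ℝ => ζ ((x i0 + t) ^ 2 + (x i1 / b) ^ 2) := by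
      funext t
      rw [hα]
      have h0 : (x + t • e0) i0 = x i0 + t := by simp [he0]
      have h1 : (x + t • e0) i1 = x i1 := by
        simp [he0, Pi.single_eq_of_ne (Ne.symm hi01)]
      rw [h0, h1]
      exact hZtail _ _ _ (fun i hi => by
        have hne : i ≠ i0 := by
          intro h; rw [h] at hi; simp [hi0] at hi
        simp [he0, Pi.single_eq_of_ne hne])
    have hrhs : HasDerivAt (fun t : ℝ => ζ ((x i0 + t) ^ 2 + (x i1 / b) ^ 2))
        (P * (2 * x i0)) 0 := by
      have hin : HasDerivAt (fun t : ℝ => (x i0 + t) ^ 2 + (x i1 / b) ^ 2)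
          (2 * x i0) 0 := by
        have := (((hasDerivAt_id (0:ℝ)).const_add (x i0)).pow 2).add_const
          ((x i1 / b) ^ 2)
        simpa using this
      have hz' : HasDerivAt ζ P ((x i0 + 0) ^ 2 + (x i1 / b) ^ 2) := by
        rw [show (x i0 + 0) ^ 2 + (x i1 / b) ^ 2 = u₀ from by rw [hu₀]; ring]
        exact (hζdiff u₀).hasDerivAt
      exact hz'.comp 0 hin
    rw [heq] at hcomp
    exact hcomp.unique hrhs
  have key1 : p1 = P * (2 * x i1 / b ^ 2) := by
    have hline : HasDerivAt (fun t : ℝ => x + t • e1) e1 0 := by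
      simpa using ((hasDerivAt_id (0:ℝ)).smul_const e1).const_add x
    have hφ' : HasFDerivAt α φ (x + (0:ℝ) • e1) := by simpa using hφ
    have hcomp : HasDerivAt (fun t : ℝ => α (x + t • e1)) p1 0 :=
      hφ'.comp_hasDerivAt 0 hline
    have heq : (fun t : ℝ => α (x + t • e1))
        = fun t : ℝ => ζ (x i0 ^ 2 + ((x i1 + t) / b) ^ 2) := by
      funext t
      rw [hα]
      have h0 : (x + t • e1) i0 = x i0 := by
        simp [he1, Pi.single_eq_of_ne hi01]
      have h1 : (x + t • e1) i1 = x i1 + t := by simp [he1]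
      rw [h0, h1]
      exact hZtail _ _ _ (fun i hi => by
        have hne : i ≠ i1 := by
          intro h; rw [h] at hi; simp [hi1] at hi
        simp [he1, Pi.single_eq_of_ne hne])
    have hrhs : HasDerivAt (fun t : ℝ => ζ (x i0 ^ 2 + ((x i1 + t) / b) ^ 2))
        (P * (2 * x i1 / b ^ 2)) 0 := by
      have hin : HasDerivAt (fun t : ℝ => x i0 ^ 2 + ((x i1 + t) / b) ^ 2)
          (2 * x i1 / b ^ 2) 0 := by
        have h2 := ((((hasDerivAt_id (0:ℝ)).const_add (x i1)).div_const b).pow 2).const_add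
          (x i0 ^ 2)
        have hval : ((2:ℕ):ℝ) * ((x i1 + id (0:ℝ)) / b) ^ (2 - 1) * (1 / b)
            = 2 * x i1 / b ^ 2 := by
          simp only [id_eq, add_zero, pow_one]
          push_cast
          ring
        rw [← hval]
        exact h2
      have hz' : HasDerivAt ζ P (x i0 ^ 2 + ((x i1 + 0) / b) ^ 2) := by
        rw [show x i0 ^ 2 + ((x i1 + 0) / b) ^ 2 = u₀ from by rw [hu₀]; ring]
        exact (hζdiff u₀).hasDerivAt
      exact hz'.comp 0 hin
    rw [heq] at hcomp
    exact hcomp.unique hrhs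
  -- the candidate Jacobian matrix
  set c1 : ℝ := -(x i0 * B) - (1 / b) * x i1 * A with hc1
  set c2 : ℝ := b * x i0 * A - x i1 * B with hc2
  set M : Matrix (Fin d) (Fin d) ℝ := fun i j =>
    if i = i0 then
      (if j = i0 then A else 0) + (if j = i1 then -(1 / b) * B else 0)
        + c1 * φ (Pi.single j 1)
    else if i = i1 then
      (if j = i0 then b * B else 0) + (if j = i1 then A else 0)
        + c2 * φ (Pi.single j 1)
    else if j = i then 1 else 0 with hM
  set L : (Fin d → ℝ) →L[ℝ] (Fin d → ℝ) :=
    LinearMap.toContinuousLinearMap (Matrix.toLin' M) with hLdef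
  -- evaluation of L
  have hsingle : ∀ j : Fin d, (Pi.single j 1 : Fin d → ℝ)
      = fun k => if j = k then 1 else 0 :=
    fun j => funext fun k => by
      rcases eq_or_ne k j with h | h
      · subst h; simp
      · simp [Pi.single_eq_of_ne h, Ne.symm h]
  have hφsum : ∀ v : Fin d → ℝ, φ v = ∑ j, v j * φ (Pi.single j 1) := by
    intro v
    have := (φ : (Fin d → ℝ) →ₗ[ℝ] ℝ).pi_apply_eq_sum_univ v
    simp only [ContinuousLinearMap.coe_coe, smul_eq_mul] at this
    rw [this]
    exact Finset.sum_congr rfl fun j _ => by rw [hsingle j]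
  have hLapply : ∀ (v : Fin d → ℝ) (i : Fin d), L v i = Matrix.mulVec M v i := by
    intro v i
    simp [hLdef, Matrix.toLin'_apply]
  have hswap : ∀ v : Fin d → ℝ, ∀ c : ℝ,
      ∑ j, c * φ (Pi.single j 1) * v j = c * ∑ j, v j * φ (Pi.single j 1) := by
    intro v c
    rw [Finset.mul_sum]
    exact Finset.sum_congr rfl fun j _ => by ring
  have hrow0 : ∀ v : Fin d → ℝ, Matrix.mulVec M v i0
      = A * v i0 + (-(1 / b) * B) * v i1 + c1 * φ v := by
    intro v
    rw [hφsum v]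
    simp only [Matrix.mulVec, dotProduct, hM, eq_self_iff_true, if_true]
    simp only [add_mul, ite_mul, zero_mul]
    rw [Finset.sum_add_distrib, Finset.sum_add_distrib,
      Finset.sum_ite_eq' Finset.univ i0, Finset.sum_ite_eq' Finset.univ i1,
      hswap v c1]
    simp
  have hrow1 : ∀ v : Fin d → ℝ, Matrix.mulVec M v i1
      = (b * B) * v i0 + A * v i1 + c2 * φ v := by
    intro v
    rw [hφsum v]
    simp only [Matrix.mulVec, dotProduct, hM, if_neg (Ne.symm hi01), eq_self_iff_true, if_true]
    simp only [add_mul, ite_mul, zero_mul]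
    rw [Finset.sum_add_distrib, Finset.sum_add_distrib,
      Finset.sum_ite_eq' Finset.univ i0, Finset.sum_ite_eq' Finset.univ i1,
      hswap v c2]
    simp
  have hrowtail : ∀ (v : Fin d → ℝ) (i : Fin d), i ≠ i0 → i ≠ i1 →
      Matrix.mulVec M v i = v i := by
    intro v i h0 h1
    simp only [Matrix.mulVec, dotProduct, hM, if_neg h0, if_neg h1]
    simp only [ite_mul, one_mul, zero_mul]
    rw [Finset.sum_ite_eq' Finset.univ i]
    simp
  -- F has derivative L at x
  have hcosd : HasFDerivAt (fun v => Real.cos (α v)) ((-B) • φ) x := by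
    have h := (Real.hasDerivAt_cos (α x)).comp_hasFDerivAt x hφ
    rw [hB]
    exact h
  have hsind : HasFDerivAt (fun v => Real.sin (α v)) (A • φ) x := by
    have h := (Real.hasDerivAt_sin (α x)).comp_hasFDerivAt x hφ
    rw [hA]
    exact h
  have hproj : ∀ i : Fin d, HasFDerivAt (fun v : Fin d → ℝ => v i)
      ((ContinuousLinearMap.proj i : (Fin d → ℝ) →L[ℝ] ℝ)) x :=
    fun i => (ContinuousLinearMap.proj i : (Fin d → ℝ) →L[ℝ] ℝ).hasFDerivAt
  have hFL : HasFDerivAt F L x := by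
    rw [hasFDerivAt_pi']
    intro i
    rcases Nat.lt_or_ge (i : ℕ) 2 with hlt | hge
    · rcases (by omega : (i : ℕ) = 0 ∨ (i : ℕ) = 1) with h | h
      · -- i = i0
        have hii : i = i0 := Fin.ext h
        subst hii
        have hfun : (fun v => F v i0)
            = fun v => v i0 * Real.cos (α v) - (1 / b) * v i1 * Real.sin (α v) := by
          funext v; rw [hF v]; simp [hi0]
        rw [hfun]
        have h1 : HasFDerivAt (fun v : Fin d → ℝ => v i0 * Real.cos (α v))
            (x i0 • ((-B) • φ) + A • ContinuousLinearMap.proj i0) x := by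
          exact (hproj i0).mul hcosd
        have h2 : HasFDerivAt (fun v : Fin d → ℝ => (1 / b) * v i1 * Real.sin (α v))
            ((1 / b * x i1) • (A • φ) + B • ((1 / b) • ContinuousLinearMap.proj i1)) x := by
          have hc : HasFDerivAt (fun v : Fin d → ℝ => (1 / b) * v i1)
              ((1 / b) • (ContinuousLinearMap.proj i1 : (Fin d → ℝ) →L[ℝ] ℝ)) x := by
            simpa using (hproj i1).const_mul (1 / b)
          exact hc.mul hsind
        have h3 : HasFDerivAt (fun v : Fin d → ℝ => v i0 * Real.cos (α v) - (1 / b) * v i1 * Real.sin (α v)) _ x := h1.sub h2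
        refine h3.congr_fderiv ?_
        refine ContinuousLinearMap.ext fun v => ?_
        simp only [ContinuousLinearMap.coe_comp', Function.comp_apply,
          ContinuousLinearMap.proj_apply, ContinuousLinearMap.add_apply,
          ContinuousLinearMap.coe_sub', Pi.sub_apply,
          ContinuousLinearMap.smul_apply, ContinuousLinearMap.coe_smul',
          Pi.smul_apply, smul_eq_mul]
        rw [hLapply, hrow0]
        simp only [hc1]
        ring
      · -- i = i1
        have hii : i = i1 := Fin.ext h
        subst hii
        have hfun : (fun v => F v i1)
            = fun v => b * v i0 * Real.sin (α v) + v i1 * Real.cos (α v) := by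
          funext v; rw [hF v]; simp [hi1]
        rw [hfun]
        have h1 : HasFDerivAt (fun v : Fin d → ℝ => b * v i0 * Real.sin (α v))
            ((b * x i0) • (A • φ) + B • (b • ContinuousLinearMap.proj i0)) x := by
          have hc : HasFDerivAt (fun v : Fin d → ℝ => b * v i0)
              (b • (ContinuousLinearMap.proj i0 : (Fin d → ℝ) →L[ℝ] ℝ)) x := by
            simpa using (hproj i0).const_mul b
          exact hc.mul hsind
        have h2 : HasFDerivAt (fun v : Fin d → ℝ => v i1 * Real.cos (α v))
            (x i1 • ((-B) • φ) + A • ContinuousLinearMap.proj i1) x := by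
          exact (hproj i1).mul hcosd
        have h3 : HasFDerivAt (fun v : Fin d → ℝ => b * v i0 * Real.sin (α v) + v i1 * Real.cos (α v)) _ x := h1.add h2
        refine h3.congr_fderiv ?_
        refine ContinuousLinearMap.ext fun v => ?_
        simp only [ContinuousLinearMap.coe_comp', Function.comp_apply,
          ContinuousLinearMap.proj_apply, ContinuousLinearMap.add_apply,
          ContinuousLinearMap.smul_apply, ContinuousLinearMap.coe_smul',
          Pi.smul_apply, smul_eq_mul]
        rw [hLapply, hrow1]
        simp only [hc2]
        ring
    · -- tail coordinate
      have h0 : i ≠ i0 := by intro h; rw [h] at hge; simp [hi0] at hge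
      have h1 : i ≠ i1 := by intro h; rw [h] at hge; simp [hi1] at hge
      have hfun : (fun v => F v i) = fun v : Fin d → ℝ => v i := by
        funext v; rw [hF v]
        simp only []
        split_ifs with ha hb
        · exfalso; omega
        · exfalso; omega
        · rfl
      rw [hfun]
      refine (hproj i).congr_fderiv ?_
      refine ContinuousLinearMap.ext fun v => ?_
      simp only [ContinuousLinearMap.coe_comp', Function.comp_apply,
        ContinuousLinearMap.proj_apply]
      rw [hLapply, hrowtail v i h0 h1]
  -- determinant computation
  have hdF : fderiv ℝ F x = L := hFL.fderiv
  rw [hdF]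
  have hdet : ContinuousLinearMap.det L = Matrix.det M := by
    rw [ContinuousLinearMap.det, hLdef, LinearMap.coe_toContinuousLinearMap,
      LinearMap.det_toLin']
  rw [hdet]
  -- block structure
  have hd2 : 2 + (d - 2) = d := by omega
  set e : Fin 2 ⊕ Fin (d - 2) ≃ Fin d := finSumFinEquiv.trans (finCongr hd2) with he
  have he00 : e (Sum.inl 0) = i0 := by
    rw [hi0]
    apply Fin.ext
    simp [he]
  have he01 : e (Sum.inl 1) = i1 := by
    rw [hi1]
    apply Fin.ext
    simp [he]
  have heval : ∀ k : Fin (d - 2), ((e (Sum.inr k)) : ℕ) = 2 + k := by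
    intro k
    simp [he]
  have hne0 : ∀ k : Fin (d - 2), e (Sum.inr k) ≠ i0 := by
    intro k h
    have := heval k
    rw [h, hi0] at this
    simp at this
    omega
  have hne1 : ∀ k : Fin (d - 2), e (Sum.inr k) ≠ i1 := by
    intro k h
    have := heval k
    rw [h, hi1] at this
    simp at this
    omega
  set T : Matrix (Fin 2) (Fin 2) ℝ :=
    Matrix.of (fun i j : Fin 2 => M (e (Sum.inl i)) (e (Sum.inl j))) with hT
  set Bk : Matrix (Fin 2) (Fin (d - 2)) ℝ :=
    Matrix.of (fun i j => M (e (Sum.inl i)) (e (Sum.inr j))) with hBk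
  have hblock : M.submatrix e e = Matrix.fromBlocks T Bk 0 1 := by
    ext i j
    rcases i with i | i <;> rcases j with j | j
    · rfl
    · rfl
    · -- zero block
      show M (e (Sum.inr i)) (e (Sum.inl j)) = 0
      have hrne : e (Sum.inl j) ≠ e (Sum.inr i) := by
        intro h
        exact absurd (e.injective h) (by simp)
      simp only [hM, if_neg (hne0 i), if_neg (hne1 i), if_neg hrne]
    · -- identity block
      show M (e (Sum.inr i)) (e (Sum.inr j)) = (1 : Matrix (Fin (d - 2)) (Fin (d - 2)) ℝ) i j
      have hiff : e (Sum.inr j) = e (Sum.inr i) ↔ i = j := by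
        constructor
        · intro h
          have := e.injective h
          exact (Sum.inr_injective this).symm
        · intro h; rw [h]
      simp only [hM, if_neg (hne0 i), if_neg (hne1 i), Matrix.one_apply]
      by_cases h : i = j
      · rw [if_pos (hiff.mpr h), if_pos h]
      · rw [if_neg (fun hc => h (hiff.mp hc)), if_neg h]
  have hdetM : M.det = T.det := by
    rw [← Matrix.det_submatrix_equiv_self e M, hblock,
      Matrix.det_fromBlocks_zero₂₁, Matrix.det_one, mul_one]
  rw [hdetM]
  rw [Matrix.det_fin_two]
  have hT00 : T 0 0 = A + c1 * p0 := by
    simp [hT, he00, hM, hp0def, he0, hi01, Ne.symm hi01]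
  have hT01 : T 0 1 = -(1 / b) * B + c1 * p1 := by
    simp [hT, he00, he01, hM, hp1def, he1, hi01, Ne.symm hi01]
  have hT10 : T 1 0 = b * B + c2 * p0 := by
    simp [hT, he00, he01, hM, hp0def, he0, hi01, Ne.symm hi01]
  have hT11 : T 1 1 = A + c2 * p1 := by
    simp [hT, he01, hM, hp1def, he1, hi01, Ne.symm hi01]
  rw [hT00, hT01, hT10, hT11, hc1, hc2, key0, key1]
  have htrig : A ^ 2 + B ^ 2 = 1 := by
    rw [hA, hB]; exact Real.cos_sq_add_sin_sq _
  field_simp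
  linear_combination (b ^ 3) * htrig
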